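/- arXiv:2405.11319 — 5 statements merged into one kernel-verified Lean document; each statement's English description precedes it below -/
import Mathlib

section
/- If f is a polynomial in the kernel of the map φ: K[z_1,...,z_{d+r}] → K[s_1,...,s_d] sending z_i to s^{m_i} (monomial with exponent vector m_i), then the homogenization f^h of f with respect to a new variable z_0 lies in the kernel of the map φ^h: K[z_0,...,z_{d+r}] → K[s_1,...,s_d,t_1,...,t_d] sending z_0 to s^{m_{d+r}} and z_i to s^{m_{d+r}-m_i} t^{m_i} for 1 ≤ i ≤ d+r. -/
/-!
Both `φ` and `φʰ` send monomials to monomials. If `B = ∑ aᵢ mᵢ` is the exponent of `φ(zᵃ)` and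
`D = deg f ≥ |a|`, then, because every `mᵢ ≤ m_{d+r}`, the exponent of `φʰ(zᵃ z₀^{D - |a|})` is
`(D m_{d+r} - B, B)`. Hence `φʰ(fʰ)` is obtained from `φ(f) = 0` by the relabelling of exponents
`b ↦ (D m_{d+r} - b, b)`, which is linear over `K`, so it vanishes.
-/

open MvPolynomial

/-- Homogenization of a multivariate polynomial with respect to a new variable (`none`). -/
noncomputable def homogenize {K : Type*} [CommRing K] {n : ℕ}
    (f : MvPolynomial (Fin n) K) : MvPolynomial (Option (Fin n)) K :=
  ∑ s ∈ f.support,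
    monomial (Finsupp.mapDomain Option.some s +
      Finsupp.single (none : Option (Fin n)) (f.totalDegree - s.sum fun _ e => e)) (f.coeff s)

theorem Finsupp.linearCombination_apply_apply {α β R : Type*} [Semiring R] (v : α → β →₀ R)
    (l : α →₀ R) (x : β) : Finsupp.linearCombination R v l x = ∑ i ∈ l.support, l i * v i x := by
  simp [Finsupp.linearCombination_apply, Finsupp.sum, Finsupp.finsetSum_apply]

theorem Finset.sum_mul_tsub_add_tsub_mul {ι : Type*} (s : Finset ι) (w x : ι → ℕ) (X D : ℕ)
    (hx : ∀ i ∈ s, x i ≤ X) (hD : ∑ i ∈ s, w i ≤ D) :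
    ∑ i ∈ s, w i * (X - x i) + (D - ∑ i ∈ s, w i) * X = D * X - ∑ i ∈ s, w i * x i := by
  have hle : ∑ i ∈ s, w i * x i ≤ (∑ i ∈ s, w i) * X := by
    rw [Finset.sum_mul]
    exact Finset.sum_le_sum fun i hi => Nat.mul_le_mul_left _ (hx i hi)
  have hsplit : ∑ i ∈ s, w i * (X - x i) = (∑ i ∈ s, w i) * X - ∑ i ∈ s, w i * x i := by
    simp only [Nat.mul_sub, Finset.sum_mul]
    exact Finset.sum_tsub_distrib _ fun i hi => Nat.mul_le_mul_left _ (hx i hi)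
  have hmono : (∑ i ∈ s, w i) * X ≤ D * X := Nat.mul_le_mul_right _ hD
  rw [hsplit, Nat.sub_mul]
  omega

section MonomialMaps

variable {R σ τ σ' τ' : Type*} [CommSemiring R]

theorem aeval_monomial_one_monomial (g : σ → τ →₀ ℕ) (a : σ →₀ ℕ) (c : R) :
    aeval (fun i => monomial (g i) (1 : R)) (monomial a c) =
      monomial (Finsupp.linearCombination ℕ g a) c := by
  classical
  simp only [aeval_monomial, algebraMap_eq, Finsupp.prod, monomial_pow, one_pow,
    Finsupp.linearCombination_apply, Finsupp.sum]
  rw [← monomial_sum_one, C_mul_monomial, mul_one]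

theorem aeval_monomial_one_sum_monomial_eq_mapDomain (g : σ → τ →₀ ℕ) (g' : σ' → τ' →₀ ℕ)
    (e : (σ →₀ ℕ) → σ' →₀ ℕ) (G : (τ →₀ ℕ) → τ' →₀ ℕ) (f : MvPolynomial σ R)
    (he : ∀ a ∈ f.support,
      Finsupp.linearCombination ℕ g' (e a) = G (Finsupp.linearCombination ℕ g a)) :
    aeval (fun i => monomial (g' i) (1 : R)) (∑ a ∈ f.support, monomial (e a) (f.coeff a)) =
      AddMonoidAlgebra.mapDomainLinearMap R R G (aeval (fun i => monomial (g i) (1 : R)) f) := by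
  have hG (b : τ →₀ ℕ) (c : R) :
      AddMonoidAlgebra.mapDomainLinearMap R R G (monomial b c) = monomial (G b) c :=
    AddMonoidAlgebra.mapDomainLinearMap_single _ _ _
  conv_rhs => rw [f.as_sum]
  simp only [map_sum, aeval_monomial_one_monomial, hG]
  exact Finset.sum_congr rfl fun a ha => by rw [he a ha]

end MonomialMaps

section Homogenization

variable {σ ι : Type*}

/-- The exponents of `φʰ(z₀)` (at `none`) and of `φʰ(z_j)` in `K[s, t]`, the `s`-part on the left. -/
noncomputable def homogenizedWeight (M : ι →₀ ℕ) (m : σ → ι →₀ ℕ) : Option σ → ι ⊕ ι →₀ ℕ :=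
  fun i => i.elim (M.sumElim 0) fun j => (M - m j).sumElim (m j)

theorem linearCombination_homogenizedWeight (M : ι →₀ ℕ) (m : σ → ι →₀ ℕ) (hm : ∀ i, m i ≤ M)
    (a : σ →₀ ℕ) (D : ℕ) (hD : (a.sum fun _ e => e) ≤ D) :
    Finsupp.linearCombination ℕ (homogenizedWeight M m)
        (Finsupp.mapDomain Option.some a + Finsupp.single none (D - a.sum fun _ e => e)) =
      (D • M - Finsupp.linearCombination ℕ m a).sumElim (Finsupp.linearCombination ℕ m a) := by
  rw [map_add, Finsupp.linearCombination_mapDomain, Finsupp.linearCombination_single]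
  ext (u | u) <;>
    simp only [Finsupp.add_apply, Finsupp.smul_apply, Finsupp.sumElim_apply, Sum.elim_inl,
      Sum.elim_inr, Finsupp.tsub_apply, Finsupp.linearCombination_apply_apply,
      Function.comp_apply, homogenizedWeight, Option.elim, smul_eq_mul]
  · exact Finset.sum_mul_tsub_add_tsub_mul _ _ _ _ _ (fun i _ => hm i u) hD
  · simp

end Homogenization

/-- The generators `m_1, …, m_{d+r}` are `m 0, …, m n`, and `m_{d+r}` is `m (Fin.last n)`. -/
theorem stmt0 {K : Type*} [Field K] (d n : ℕ)
    (m : Fin (n + 1) → (Fin d → ℕ))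
    (hm : ∀ i j, m i j ≤ m (Fin.last n) j)
    (φ : MvPolynomial (Fin (n + 1)) K →ₐ[K] MvPolynomial (Fin d) K)
    (hφ : φ = aeval fun i => monomial (Finsupp.equivFunOnFinite.symm (m i)) 1)
    (φh : MvPolynomial (Option (Fin (n + 1))) K →ₐ[K] MvPolynomial (Fin d ⊕ Fin d) K)
    (hφh : φh = aeval (fun i => Option.elim i
        (monomial (Finsupp.equivFunOnFinite.symm
          (Sum.elim (m (Fin.last n)) (0 : Fin d → ℕ))) 1)
        (fun j => monomial (Finsupp.equivFunOnFinite.symm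
          (Sum.elim (fun t => m (Fin.last n) t - m j t) (m j))) 1)))
    (f : MvPolynomial (Fin (n + 1)) K) (hf : φ f = 0) :
    φh (homogenize f) = 0 := by
  subst hφ hφh
  let m' i := Finsupp.equivFunOnFinite.symm (m i)
  have hweight : (fun i => Option.elim i
        (monomial (Finsupp.equivFunOnFinite.symm
          (Sum.elim (m (Fin.last n)) (0 : Fin d → ℕ))) (1 : K))
        (fun j => monomial (Finsupp.equivFunOnFinite.symm
          (Sum.elim (fun t => m (Fin.last n) t - m j t) (m j))) 1)) =
      fun i => monomial (homogenizedWeight (m' (Fin.last n)) m' i) 1 := by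
    funext i
    cases i <;> refine congrArg (monomial · 1) ?_ <;> ext (u | u) <;> simp [homogenizedWeight, m']
  rw [hweight, homogenize, aeval_monomial_one_sum_monomial_eq_mapDomain m' _ _
    (fun b => (f.totalDegree • m' (Fin.last n) - b).sumElim b) f
    fun a ha => linearCombination_homogenizedWeight _ m' (fun i t => hm i t) a _
      (le_totalDegree ha), hf, map_zero]
end

section
/- Let Γ ⊆ ℕ^d be a simplicial affine semigroup with ℚ-linearly independent extremal rays a_1,...,a_d among its generators a_1,...,a_{d+r}, and let k ≥ 1. If b ∈ ℕ^d lies in the Apéry set Ap(Γ_k, E) of the k-lifting Γ_k with respect to E = {a_1,...,a_d}, and b = k·a for some a in the subsemigroup generated by a_{d+1},...,a_{d+r}, then a ∈ Ap(Γ, E), i.e., a ∈ Γ and a − a_i ∉ Γ for all 1 ≤ i ≤ d. -/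
/-!
Multiplication by `k` maps `Γ` into `Γ_k`: it sends `a_i` to `k • a_i ∈ Γ_k` and `a_{d+j}` to the
generator `k • a_{d+j}` of `Γ_k`. So if `a₀ = a_i + g` with `g ∈ Γ`, then
`k • a₀ = a_i + ((k - 1) • a_i + k • g)` with the bracket in `Γ_k`, contradicting
`k • a₀ ∈ Ap(Γ_k, E)`.
-/

open Set

namespace AddSubmonoid

theorem nsmul_mem_closure_union_range_nsmul {M ι κ : Type*} [AddCommMonoid M]
    (f : ι → M) (g : κ → M) (k : ℕ) {x : M} (hx : x ∈ closure (range f ∪ range g)) :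
    k • x ∈ closure (range f ∪ range (fun j => k • g j)) := by
  have hle : closure (range f ∪ range g) ≤
      (closure (range f ∪ range (fun j => k • g j))).comap (DistribSMul.toAddMonoidHom M k) := by
    rw [closure_le]
    rintro _ (⟨i, rfl⟩ | ⟨j, rfl⟩)
    · exact nsmul_mem (subset_closure (.inl ⟨i, rfl⟩)) k
    · exact subset_closure (.inr ⟨j, rfl⟩)
  exact hle hx

end AddSubmonoid

theorem succ_nsmul_add_eq {M : Type*} [AddCommMonoid M] (m : ℕ) (x y : M) :
    (m + 1) • (x + y) = x + (m • x + (m + 1) • y) := by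
  rw [smul_add, succ_nsmul']
  abel

theorem stmt6_general (d r k : ℕ) (hk : 1 ≤ k)
    (a : Fin d → (Fin d → ℕ)) (c : Fin r → (Fin d → ℕ))
    (Γ Γk : AddSubmonoid (Fin d → ℕ))
    (hΓ : Γ = AddSubmonoid.closure (Set.range a ∪ Set.range c))
    (hΓk : Γk = AddSubmonoid.closure (Set.range a ∪ Set.range (fun i => k • c i)))
    (b : Fin d → ℕ)
    (hb : b ∈ Γk ∧ ∀ i : Fin d, ¬ ∃ g ∈ Γk, a i + g = b)
    (a₀ : Fin d → ℕ) (ha₀ : a₀ ∈ AddSubmonoid.closure (Set.range c))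
    (hba : b = k • a₀) :
    a₀ ∈ Γ ∧ ∀ i : Fin d, ¬ ∃ g ∈ Γ, a i + g = a₀ := by
  subst hΓ hΓk hba
  refine ⟨AddSubmonoid.closure_mono subset_union_right ha₀, ?_⟩
  rintro i ⟨g, hg, rfl⟩
  obtain ⟨m, rfl⟩ : ∃ m, k = m + 1 := ⟨k - 1, by omega⟩
  have hai : a i ∈ AddSubmonoid.closure (range a ∪ range (fun j => (m + 1) • c j)) :=
    AddSubmonoid.subset_closure (.inl ⟨i, rfl⟩)
  exact hb.2 i ⟨m • a i + (m + 1) • g,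
    add_mem (nsmul_mem hai m) (AddSubmonoid.nsmul_mem_closure_union_range_nsmul a c (m + 1) hg),
    (succ_nsmul_add_eq m (a i) g).symm⟩

/-- if `b` is in the Apéry set of the `k`-lifting `Γ_k` with respect to the
extremal rays `E = {a 0, …, a (d-1)}` and `b = k • a₀` for some `a₀` in the subsemigroup
generated by the non-extremal generators, then `a₀` is in the Apéry set `Ap(Γ, E)`. -/
theorem stmt6 (d r k : ℕ) (hk : 1 ≤ k)
    (a : Fin d → (Fin d → ℕ)) (c : Fin r → (Fin d → ℕ))
    (hindep : LinearIndependent ℚ (fun i => fun j => (a i j : ℚ)))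
    (Γ Γk : AddSubmonoid (Fin d → ℕ))
    (hΓ : Γ = AddSubmonoid.closure (Set.range a ∪ Set.range c))
    (hΓk : Γk = AddSubmonoid.closure (Set.range a ∪ Set.range (fun i => k • c i)))
    (b : Fin d → ℕ)
    (hb : b ∈ Γk ∧ ∀ i : Fin d, ¬ ∃ g ∈ Γk, a i + g = b)
    (a₀ : Fin d → ℕ) (ha₀ : a₀ ∈ AddSubmonoid.closure (Set.range c))
    (hba : b = k • a₀) :
    a₀ ∈ Γ ∧ ∀ i : Fin d, ¬ ∃ g ∈ Γ, a i + g = a₀ :=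
  stmt6_general d r k hk a c Γ Γk hΓ hΓk b hb a₀ ha₀ hba
end

section
/- Let Γ ⊆ ℕ^d be a simplicial affine semigroup with extremal rays a_1,...,a_d and k ≥ 1. Every element of the Apéry set Ap(Γ_k, E) of the k-lifting that can be written in the subsemigroup generated by k·a_{d+1},...,k·a_{d+r} is of the form k·a with a ∈ Ap(Γ, E); conversely, if moreover |Ap(Γ_k,E)| = |Ap(Γ,E)| and both sets are finite, then Ap(Γ_k, E) = {k·b : b ∈ Ap(Γ, E)}. -/
/-!
Multiplication by `k` maps `Γ` into `Γ_k`, and it maps the submonoid generated by the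
non-extremal generators `c i` onto the one generated by the `k • c i`; so an element of
`Ap(Γ_k, E)` of the latter kind is `k • x` with `x ∈ Γ`. Were `x = a i + g` with `g ∈ Γ`, then
`k • x = a i + ((k - 1) • a i + k • g)` with the second summand in `Γ_k`, contradicting
`k • x ∈ Ap(Γ_k, E)`; hence `x ∈ Ap(Γ, E)`.
Since `k • ·` is injective, equal finite cardinalities turn the inclusion
`Ap(Γ_k, E) ⊆ k • Ap(Γ, E)` into an equality.
-/

open AddSubmonoid Set

variable {M ι κ : Type*} [AddCommMonoid M]

def aperySet (S : AddSubmonoid M) (e : ι → M) : Set M :=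
  {s | s ∈ S ∧ ∀ i, ¬ ∃ g ∈ S, e i + g = s}

lemma mem_closure_range_nsmul_iff {c : κ → M} {k : ℕ} {b : M} :
    b ∈ closure (range fun i => k • c i) ↔ ∃ x ∈ closure (range c), k • x = b := by
  have : closure (range fun i => k • c i) = (closure (range c)).map (nsmulAddMonoidHom k) := by
    rw [AddMonoidHom.map_mclosure, ← range_comp]
    rfl
  rw [this, mem_map]
  rfl

lemma nsmul_mem_closure_lift {a : ι → M} {c : κ → M} (k : ℕ) {x : M}
    (hx : x ∈ closure (range a ∪ range c)) :
    k • x ∈ closure (range a ∪ range fun i => k • c i) := by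
  suffices closure (range a ∪ range c) ≤
      (closure (range a ∪ range fun i => k • c i)).comap (nsmulAddMonoidHom k) from this hx
  rw [closure_le]
  rintro _ (⟨i, rfl⟩ | ⟨i, rfl⟩)
  · exact nsmul_mem (AddSubmonoid.subset_closure (mem_union_left _ (mem_range_self i))) k
  · exact AddSubmonoid.subset_closure (mem_union_right _ (mem_range_self i))

lemma mem_aperySet_of_nsmul_mem {S T : AddSubmonoid M} {e : ι → M} {k : ℕ} (hk : k ≠ 0)
    (he : ∀ i, e i ∈ T) (hST : ∀ x ∈ S, k • x ∈ T) {x : M} (hx : x ∈ S)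
    (hkx : k • x ∈ aperySet T e) : x ∈ aperySet S e := by
  refine ⟨hx, fun i ⟨g, hg, hgx⟩ => hkx.2 i ⟨(k - 1) • e i + k • g, ?_, ?_⟩⟩
  · exact add_mem (nsmul_mem (he i) _) (hST g hg)
  · obtain ⟨m, rfl⟩ := Nat.exists_eq_add_one_of_ne_zero hk
    rw [← hgx, Nat.add_sub_cancel, smul_add, succ_nsmul, succ_nsmul]
    abel

lemma exists_eq_nsmul_of_mem_aperySet_lift {a : ι → M} {c : κ → M} {k : ℕ} (hk : k ≠ 0) {b : M}
    (hb : b ∈ aperySet (closure (range a ∪ range fun i => k • c i)) a)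
    (hbc : b ∈ closure (range fun i => k • c i)) :
    ∃ x ∈ aperySet (closure (range a ∪ range c)) a, b = k • x := by
  obtain ⟨x, hx, rfl⟩ := mem_closure_range_nsmul_iff.mp hbc
  have hxΓ : x ∈ closure (range a ∪ range c) := AddSubmonoid.closure_mono subset_union_right hx
  refine ⟨x, mem_aperySet_of_nsmul_mem hk (fun i => AddSubmonoid.subset_closure (mem_union_left _ (mem_range_self i)))
    (fun _ => nsmul_mem_closure_lift k) hxΓ hb, rfl⟩

lemma aperySet_lift_eq_image [IsAddTorsionFree M] {a : ι → M} {c : κ → M} {k : ℕ} (hk : k ≠ 0)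
    (hall : ∀ b ∈ aperySet (closure (range a ∪ range fun i => k • c i)) a,
      b ∈ closure (range fun i => k • c i))
    (hfin : (aperySet (closure (range a ∪ range c)) a).Finite)
    (hcard : (aperySet (closure (range a ∪ range fun i => k • c i)) a).ncard =
      (aperySet (closure (range a ∪ range c)) a).ncard) :
    aperySet (closure (range a ∪ range fun i => k • c i)) a =
      (k • ·) '' aperySet (closure (range a ∪ range c)) a := by
  have hsub : aperySet (closure (range a ∪ range fun i => k • c i)) a ⊆
      (k • ·) '' aperySet (closure (range a ∪ range c)) a := by
    intro b hb
    obtain ⟨x, hx, rfl⟩ := exists_eq_nsmul_of_mem_aperySet_lift hk hb (hall b hb)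
    exact ⟨x, hx, rfl⟩
  refine eq_of_subset_of_ncard_le hsub ?_ (hfin.image _)
  rw [(nsmul_right_injective hk).injOn.ncard_image, hcard]

theorem stmt7_general (d r k : ℕ) (hk : 1 ≤ k)
    (a : Fin d → (Fin d → ℕ)) (c : Fin r → (Fin d → ℕ))
    (Γ Γk : AddSubmonoid (Fin d → ℕ))
    (hΓ : Γ = AddSubmonoid.closure (Set.range a ∪ Set.range c))
    (hΓk : Γk = AddSubmonoid.closure (Set.range a ∪ Set.range (fun i => k • c i)))
    (apΓ apΓk : Set (Fin d → ℕ))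
    (hapΓ : apΓ = {s | s ∈ Γ ∧ ∀ i : Fin d, ¬ ∃ g ∈ Γ, a i + g = s})
    (hapΓk : apΓk = {s | s ∈ Γk ∧ ∀ i : Fin d, ¬ ∃ g ∈ Γk, a i + g = s}) :
    (∀ b ∈ apΓk, b ∈ AddSubmonoid.closure (Set.range (fun i => k • c i)) →
      ∃ a₀ ∈ apΓ, b = k • a₀) ∧
    ((∀ b ∈ apΓk, b ∈ AddSubmonoid.closure (Set.range (fun i => k • c i))) →
      apΓ.Finite → apΓk.Finite → apΓk.ncard = apΓ.ncard →
      apΓk = (fun b => k • b) '' apΓ) := by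
  have hk₀ : k ≠ 0 := Nat.one_le_iff_ne_zero.mp hk
  change apΓ = aperySet Γ a at hapΓ
  change apΓk = aperySet Γk a at hapΓk
  subst hΓ hΓk hapΓ hapΓk
  exact ⟨fun _ hb hbc => exists_eq_nsmul_of_mem_aperySet_lift hk₀ hb hbc,
    fun hall hfin _ hcard => aperySet_lift_eq_image hk₀ hall hfin hcard⟩

/-- every element of `Ap(Γ_k, E)` lying in the subsemigroup generated by the
lifted non-extremal generators `k • c i` has the form `k • a₀` with `a₀ ∈ Ap(Γ, E)`;
and if moreover every element of `Ap(Γ_k,E)` lies in that subsemigroup, both Apéry sets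
are finite and have the same cardinality, then `Ap(Γ_k, E) = {k • b : b ∈ Ap(Γ, E)}`. -/
theorem stmt7 (d r k : ℕ) (hk : 1 ≤ k)
    (a : Fin d → (Fin d → ℕ)) (c : Fin r → (Fin d → ℕ))
    (hindep : LinearIndependent ℚ (fun i => fun j => (a i j : ℚ)))
    (Γ Γk : AddSubmonoid (Fin d → ℕ))
    (hΓ : Γ = AddSubmonoid.closure (Set.range a ∪ Set.range c))
    (hΓk : Γk = AddSubmonoid.closure (Set.range a ∪ Set.range (fun i => k • c i)))
    (apΓ apΓk : Set (Fin d → ℕ))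
    (hapΓ : apΓ = {s | s ∈ Γ ∧ ∀ i : Fin d, ¬ ∃ g ∈ Γ, a i + g = s})
    (hapΓk : apΓk = {s | s ∈ Γk ∧ ∀ i : Fin d, ¬ ∃ g ∈ Γk, a i + g = s}) :
    (∀ b ∈ apΓk, b ∈ AddSubmonoid.closure (Set.range (fun i => k • c i)) →
      ∃ a₀ ∈ apΓ, b = k • a₀) ∧
    ((∀ b ∈ apΓk, b ∈ AddSubmonoid.closure (Set.range (fun i => k • c i))) →
      apΓ.Finite → apΓk.Finite → apΓk.ncard = apΓ.ncard →
      apΓk = (fun b => k • b) '' apΓ) :=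
  stmt7_general d r k hk a c Γ Γk hΓ hΓk apΓ apΓk hapΓ hapΓk
end

section
/- Let A = K[x_1,...,x_{d+r}] and let f: A → A be the K-algebra homomorphism with f(x_i) = x_i^k for 1 ≤ i ≤ d and f(x_i) = x_i for d+1 ≤ i ≤ d+r, where k ≥ 1. Then A, viewed as an A-module via f, is faithfully flat. -/
/-!
Write `n i` for the exponent of the `i`-th variable (`k` or `1`), so that the map is
`X i ↦ X i ^ n i`. Euclidean division of exponents, `a = n * q + e` with `0 ≤ e i < n i`, writes
every monomial uniquely as `X^(n * q) * X^e`, i.e. as the image of `X^q` times a "remainder"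
monomial `X^e`. Hence the remainder monomials form a basis of the polynomial ring as a module
over itself via the map, and a nonzero free module is faithfully flat.
-/

open MvPolynomial

namespace Finsupp

variable {σ : Type*}

noncomputable def coordMap (g : σ → ℕ → ℕ) (hg : ∀ i, g i 0 = 0) (e : σ →₀ ℕ) : σ →₀ ℕ :=
  onFinset e.support (fun i => g i (e i)) fun i hi => mem_support_iff.2 fun h => hi (by rw [h, hg])

@[simp]
lemma coordMap_apply (g : σ → ℕ → ℕ) (hg : ∀ i, g i 0 = 0) (e : σ →₀ ℕ) (i : σ) :
    coordMap g hg e i = g i (e i) := rfl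

variable (n : σ → ℕ)

noncomputable def scale : (σ →₀ ℕ) → σ →₀ ℕ := coordMap (fun i m => n i * m) fun _ => rfl

@[simp]
lemma scale_apply (e : σ →₀ ℕ) (i : σ) : scale n e i = n i * e i := rfl

noncomputable def divModEquiv (hn : ∀ i, 0 < n i) :
    (σ →₀ ℕ) ≃ {e : σ →₀ ℕ // ∀ i, e i < n i} × (σ →₀ ℕ) where
  toFun b := (⟨coordMap (fun i m => m % n i) (fun _ => Nat.zero_mod _) b,
      fun i => Nat.mod_lt _ (hn i)⟩, coordMap (fun i m => m / n i) (fun _ => Nat.zero_div _) b)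
  invFun p := scale n p.2 + p.1.1
  left_inv b := by ext i; simp [Nat.div_add_mod]
  right_inv := by
    rintro ⟨⟨e, he⟩, a⟩
    ext i
    · simp [Nat.mod_eq_of_lt (he i)]
    · simp [Nat.mul_add_div (hn i), Nat.div_eq_of_lt (he i)]

end Finsupp

lemma RingHom.faithfullyFlat_of_bijective_sum {A B ι : Type*} [CommRing A] [CommRing B]
    [Nontrivial B] (φ : A →+* B) (v : ι → B)
    (h : Function.Bijective fun x : ι →₀ A => x.sum fun i a => φ a * v i) :
    φ.FaithfullyFlat := by
  algebraize [φ]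
  have := Module.Free.of_basis
    (Module.Basis.ofRepr (LinearEquiv.ofBijective (Finsupp.linearCombination A v) h).symm)
  exact (inferInstance : Module.FaithfullyFlat A B)

namespace MvPolynomial

variable {σ R : Type*} [CommRing R] (n : σ → ℕ)

noncomputable def expandVars : MvPolynomial σ R →ₐ[R] MvPolynomial σ R :=
  aeval fun i => X i ^ n i

lemma expandVars_monomial (e : σ →₀ ℕ) (r : R) :
    expandVars n (monomial e r) = monomial (Finsupp.scale n e) r := by
  rw [expandVars, aeval_monomial, monomial_eq, Finsupp.scale, Finsupp.coordMap,
    Finsupp.onFinset_prod _ fun _ => pow_zero _, algebraMap_eq, Finsupp.prod]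
  simp only [pow_mul]

lemma bijective_sum_expandVars_mul_monomial (hn : ∀ i, 0 < n i) :
    Function.Bijective fun x : {e : σ →₀ ℕ // ∀ i, e i < n i} →₀ MvPolynomial σ R =>
      x.sum fun e a => expandVars n a * monomial e.1 1 := by
  let ι := {e : σ →₀ ℕ // ∀ i, e i < n i}
  let F : (ι →₀ MvPolynomial σ R) →ₗ[R] MvPolynomial σ R :=
    Finsupp.lsum R fun e => (LinearMap.mulRight R (monomial e.1 1)).comp (expandVars n).toLinearMap
  let b : Module.Basis (ι × (σ →₀ ℕ)) R (ι →₀ MvPolynomial σ R) :=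
    (Finsupp.basis fun _ => basisMonomials σ R).reindex (Equiv.sigmaEquivProd _ _)
  have hF : F = b.equiv (basisMonomials σ R) (Finsupp.divModEquiv n hn).symm := by
    -- `single e (X^a)` goes to `X^(n * a + e)`, and `divModEquiv` inverts `(e, a) ↦ n * a + e`.
    refine b.ext fun p => ?_
    rw [LinearEquiv.coe_coe, Module.Basis.equiv_apply]
    simp [F, b, Finsupp.divModEquiv, expandVars_monomial, monomial_mul]
  change Function.Bijective F
  rw [hF]
  exact LinearEquiv.bijective _

theorem faithfullyFlat_expandVars [Nontrivial R] (hn : ∀ i, 0 < n i) :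
    (expandVars (R := R) n).toRingHom.FaithfullyFlat :=
  RingHom.faithfullyFlat_of_bijective_sum _ _ (bijective_sum_expandVars_mul_monomial n hn)

end MvPolynomial

/-- the polynomial ring `A = K[x_1,…,x_{d+r}]`, viewed as a module over itself
via the `K`-algebra endomorphism `f` raising the first `d` variables to the `k`-th power and
fixing the others, is faithfully flat. -/
theorem stmt8 {K : Type*} [Field K] (d r k : ℕ) (hk : 1 ≤ k)
    (f : MvPolynomial (Fin (d + r)) K →ₐ[K] MvPolynomial (Fin (d + r)) K)
    (hf : f = aeval (fun i : Fin (d + r) => if (i : ℕ) < d then X i ^ k else X i)) :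
    @Module.FaithfullyFlat (MvPolynomial (Fin (d + r)) K) (MvPolynomial (Fin (d + r)) K) _ _
      (Module.compHom _ f.toRingHom) := by
  have hf_expand : f = expandVars fun i : Fin (d + r) => if (i : ℕ) < d then k else 1 := by
    rw [hf, expandVars]
    congr 1
    ext1 i
    split_ifs <;> simp
  subst hf_expand
  exact faithfullyFlat_expandVars _ fun i => by split_ifs <;> omega
end

section
/- Let Γ ⊆ ℕ^d be a simplicial affine semigroup with extremal rays E = {m_1,...,m_d}, all generators componentwise ≤ m_{d+r}. Under the reverse lexicographic orders ≺ on K[z_1,...,z_{d+r}] and ≺_0 on K[z_0,...,z_{d+r}] (with z_0 smallest), the minimal monomial generating sets of the initial ideals coincide: G(in_≺(I(Γ))) = G(in_{≺_0}(I(Γ^h))). Consequently, z_1,...,z_d divide no minimal generator of in_≺(I(Γ)) if and only if z_0, z_1,...,z_d divide no minimal generator of in_{≺_0}(I(Γ^h)). -/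
open MvPolynomial

/-!
Homogenizing a relation `f ∈ I(Γ)` to the degree `e` of its leading monomial (each term `z^w`
multiplied by `z_0^(e - |w|)`) gives a relation of `I(Γ^h)` with the same leading monomial,
because `z_0` is the smallest variable. Conversely, all generators of `Γ^h` have degree `|top|`,
so `I(Γ^h)` is homogeneous and a relation with leading exponent `v` may be replaced by its
component of degree `|v|`; setting `z_0 = 1` in it gives a relation of `I(Γ)` whose leading
exponent is `v` without its `z_0`-entry, a divisor of `v`. So `in(I(Γ^h))` is generated by the
monomials of `in(I(Γ))`, and none of its minimal generators involves `z_0`.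
-/

/-- Total degree of an exponent vector. -/
def expDeg {n : ℕ} (u : Fin n →₀ ℕ) : ℕ := u.sum fun _ e => e

/-- Degree reverse lexicographic comparison `u ≺ v`, where a smaller index means a smaller
variable (`z_1 ≺ z_2 ≺ …`): first compare total degrees, then at the smallest index where
the exponents differ the smaller monomial has the larger exponent. -/
def drlLT {n : ℕ} (u v : Fin n →₀ ℕ) : Prop :=
  expDeg u < expDeg v ∨
    (expDeg u = expDeg v ∧ ∃ i, v i < u i ∧ ∀ j, j < i → u j = v j)

/-- `u` is the leading exponent (w.r.t. degrevlex) of `f`. -/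
def IsLeadExp {K : Type*} [CommSemiring K] {n : ℕ}
    (f : MvPolynomial (Fin n) K) (u : Fin n →₀ ℕ) : Prop :=
  u ∈ f.support ∧ ∀ v ∈ f.support, v ≠ u → drlLT v u

/-- The initial ideal of `I` w.r.t. degrevlex. -/
noncomputable def initialIdeal {K : Type*} [Field K] {n : ℕ} (I : Ideal (MvPolynomial (Fin n) K)) :
    Ideal (MvPolynomial (Fin n) K) :=
  Ideal.span {p | ∃ f ∈ I, f ≠ 0 ∧ ∃ u, IsLeadExp f u ∧ p = monomial u 1}

/-- The exponents of the monomials belonging to an ideal. -/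
def monSet (K : Type*) [Field K] {n : ℕ} (J : Ideal (MvPolynomial (Fin n) K)) :
    Set (Fin n →₀ ℕ) :=
  {u | monomial u (1 : K) ∈ J}

/-- `G(J)`: the minimal monomial generating set of a monomial ideal, identified with the
set of exponents of monomials of `J` that are minimal for divisibility. -/
def minMonGens (K : Type*) [Field K] {n : ℕ} (J : Ideal (MvPolynomial (Fin n) K)) :
    Set (Fin n →₀ ℕ) :=
  {u | u ∈ monSet K J ∧ ∀ v ∈ monSet K J, v ≤ u → v = u}

lemma Finsupp.degree_cons {n : ℕ} {M : Type*} [AddCommMonoid M] (y : M) (s : Fin n →₀ M) :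
    (Finsupp.cons y s).degree = y + s.degree := by
  simp [Finsupp.degree_eq_sum, Fin.sum_univ_succ, Finsupp.cons_zero, Finsupp.cons_succ]

lemma Finsupp.degree_eq_apply_zero_add_degree_tail {n : ℕ} {M : Type*} [AddCommMonoid M]
    (w : Fin (n + 1) →₀ M) :
    w.degree = w 0 + w.tail.degree := by
  conv_lhs => rw [← Finsupp.cons_tail w]
  exact Finsupp.degree_cons _ _

lemma Finsupp.degree_sumElim {α β M : Type*} [AddCommMonoid M] (f : α →₀ M) (g : β →₀ M) :
    (Finsupp.sumElim f g).degree = f.degree + g.degree := by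
  have : Finsupp.sumElim f g = f.mapDomain Sum.inl + g.mapDomain Sum.inr := by
    ext (x | x) <;> simp [Finsupp.mapDomain_apply Sum.inl_injective,
      Finsupp.mapDomain_apply Sum.inr_injective, Finsupp.mapDomain_of_notMem_range]
  rw [this, map_add, Finsupp.degree_mapDomain, Finsupp.degree_mapDomain]

lemma Finsupp.linearCombination_apply_eq_sum {ι τ R : Type*} [Fintype ι] [Semiring R]
    (v : ι → τ →₀ R) (w : ι →₀ R) (x : τ) :
    Finsupp.linearCombination R v w x = ∑ i, w i * v i x := by
  rw [Finsupp.linearCombination_apply, Finsupp.sum_fintype _ _ (by simp), Finsupp.finsetSum_apply]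
  simp

noncomputable def Finsupp.mapDomainOrderEmbedding {ι κ M : Type*} [AddCommMonoid M]
    [PartialOrder M] {f : ι → κ} (hf : f.Injective) : (ι →₀ M) ↪o (κ →₀ M) :=
  OrderEmbedding.ofMapLEIff (Finsupp.mapDomain f) (Finsupp.mapDomain_le_mapDomain_iff_le hf)

lemma Finsupp.cons_zero_eq_mapDomain_succ {n : ℕ} {M : Type*} [AddCommMonoid M]
    (u : Fin n →₀ M) : Finsupp.cons 0 u = Finsupp.mapDomain Fin.succ u := by
  ext x
  cases x using Fin.cases with
  | zero => simp [Finsupp.mapDomain_of_notMem_range]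
  | succ i => simp [Finsupp.mapDomain_apply (Fin.succ_injective n)]

lemma minimal_mem_upperClosure_iff {α : Type*} [PartialOrder α] {s : Set α} {x : α} :
    Minimal (· ∈ (upperClosure s : Set α)) x ↔ Minimal (· ∈ s) x := by
  simp only [SetLike.mem_coe, mem_upperClosure]
  constructor
  · rintro ⟨⟨a, has, hax⟩, hmin⟩
    obtain rfl := le_antisymm (hmin ⟨a, has, le_rfl⟩ hax) hax
    exact ⟨has, fun b hbs hbx => hmin ⟨b, hbs, le_rfl⟩ hbx⟩
  · rintro ⟨hxs, hmin⟩
    exact ⟨⟨x, hxs, le_rfl⟩, fun y ⟨b, hbs, hby⟩ hyx => (hmin hbs (hby.trans hyx)).trans hby⟩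

namespace AddMonoidAlgebra

variable {R M N O : Type*} [Semiring R]

lemma mapDomain_mapDomain (f : M → N) (g : N → O) (x : AddMonoidAlgebra R M) :
    mapDomain g (mapDomain f x) = mapDomain (g ∘ f) x := by
  ext; simp [Finsupp.mapDomain_comp]

lemma mapDomain_congr {f g : M → N} {x : AddMonoidAlgebra R M}
    (h : ∀ m ∈ x.coeff.support, f m = g m) : mapDomain f x = mapDomain g x := by
  ext; simp [Finsupp.mapDomain_congr h]

end AddMonoidAlgebra

namespace MvPolynomial

variable {σ τ K : Type*} [CommSemiring K]

lemma mem_support_mapDomain_of_injOn {h : (σ →₀ ℕ) → (τ →₀ ℕ)} {p : MvPolynomial σ K}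
    (hh : Set.InjOn h p.support) {m : τ →₀ ℕ} :
    m ∈ MvPolynomial.support (AddMonoidAlgebra.mapDomain h p) ↔ ∃ w ∈ p.support, h w = m := by
  classical
  change m ∈ (Finsupp.mapDomain h (AddMonoidAlgebra.coeff p)).support ↔ _
  rw [Finsupp.mapDomain_support_of_injOn _ hh, Finset.mem_image]
  rfl

lemma aeval_monomial_one_eq_mapDomain (μ : σ → τ →₀ ℕ) (p : MvPolynomial σ K) :
    aeval (fun i => monomial (μ i) (1 : K)) p =
      AddMonoidAlgebra.mapDomain (Finsupp.linearCombination ℕ μ) p := by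
  suffices aeval (fun i => monomial (μ i) (1 : K)) =
      AddMonoidAlgebra.mapDomainAlgHom K K (Finsupp.linearCombination ℕ μ).toAddMonoidHom from
    DFunLike.congr_fun this p
  refine algHom_ext fun i => ?_
  rw [aeval_X]
  change _ = AddMonoidAlgebra.mapDomain _ (AddMonoidAlgebra.single (Finsupp.single i 1) 1)
  rw [AddMonoidAlgebra.mapDomain_single]
  simp [monomial]

lemma homogeneousComponent_aeval {g : σ → MvPolynomial τ K} {T : ℕ} (hT : 0 < T)
    (hg : ∀ i, (g i).IsHomogeneous T) (p : MvPolynomial σ K) (e : ℕ) :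
    homogeneousComponent (T * e) (aeval g p) = aeval g (homogeneousComponent e p) := by
  conv_lhs => rw [← sum_homogeneousComponent p]
  rw [map_sum, map_sum, Finset.sum_eq_single e]
  · exact homogeneousComponent_eq_self ((homogeneousComponent_isHomogeneous e p).aeval g hg)
  · intro k _ hk
    rw [homogeneousComponent_of_mem ((homogeneousComponent_isHomogeneous k p).aeval g hg),
      if_neg (fun h => hk (Nat.eq_of_mul_eq_mul_left hT h).symm)]
  · intro he
    rw [homogeneousComponent_eq_zero e p (by simpa using he), map_zero, map_zero]

end MvPolynomial

section DegRevLex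

variable {n : ℕ}

lemma expDeg_eq_degree (u : Fin n →₀ ℕ) : expDeg u = u.degree := rfl

lemma drlLT_cons {e : ℕ} {w u : Fin n →₀ ℕ} (hw : w.degree ≤ e) (hu : u.degree ≤ e)
    (h : drlLT w u) : drlLT (Finsupp.cons (e - w.degree) w) (Finsupp.cons (e - u.degree) u) := by
  have hdeg : ∀ s : Fin n →₀ ℕ, s.degree ≤ e → expDeg (Finsupp.cons (e - s.degree) s) = e := by
    intro s hs
    rw [expDeg_eq_degree, Finsupp.degree_cons]
    omega
  refine Or.inr ⟨by rw [hdeg w hw, hdeg u hu], ?_⟩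
  rcases h with hlt | ⟨heq, i, hi, hbefore⟩
  · refine ⟨0, ?_, fun j hj => absurd hj (Fin.not_lt_zero j)⟩
    rw [expDeg_eq_degree, expDeg_eq_degree] at hlt
    rw [Finsupp.cons_zero, Finsupp.cons_zero]
    omega
  · refine ⟨i.succ, by simpa using hi, fun j hj => ?_⟩
    cases j using Fin.cases with
    | zero => simp only [Finsupp.cons_zero, ← expDeg_eq_degree, heq]
    | succ j => simpa using hbefore j (Fin.succ_lt_succ_iff.mp hj)

lemma drlLT_tail {w v : Fin (n + 1) →₀ ℕ} (hdeg : w.degree = v.degree) (h : drlLT w v) :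
    drlLT w.tail v.tail := by
  have hw := Finsupp.degree_eq_apply_zero_add_degree_tail w
  have hv := Finsupp.degree_eq_apply_zero_add_degree_tail v
  rcases h with hlt | ⟨-, i, hi, hbefore⟩
  · rw [expDeg_eq_degree, expDeg_eq_degree] at hlt
    omega
  · cases i using Fin.cases with
    | zero =>
      left
      rw [expDeg_eq_degree, expDeg_eq_degree]
      omega
    | succ i =>
      have h0 : w 0 = v 0 := hbefore 0 (Fin.succ_pos i)
      refine Or.inr ⟨by rw [expDeg_eq_degree, expDeg_eq_degree]; omega, i, hi, fun j hj => ?_⟩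
      exact hbefore j.succ (Fin.succ_lt_succ_iff.mpr hj)

end DegRevLex

namespace IsLeadExp

variable {n : ℕ} {K : Type*} [CommSemiring K] {f : MvPolynomial (Fin n) K} {u : Fin n →₀ ℕ}

lemma ne_zero (h : IsLeadExp f u) : f ≠ 0 := by
  rintro rfl
  exact (Finset.notMem_empty u) h.1

lemma degree_le (h : IsLeadExp f u) {w : Fin n →₀ ℕ} (hw : w ∈ f.support) :
    w.degree ≤ u.degree := by
  rcases eq_or_ne w u with rfl | hwu
  · rfl
  · rcases h.2 w hw hwu with hlt | ⟨heq, -⟩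
    exacts [hlt.le, heq.le]

lemma homogeneousComponent (h : IsLeadExp f u) :
    IsLeadExp (homogeneousComponent u.degree f) u := by
  simp only [IsLeadExp, support_homogeneousComponent, Finset.mem_filter]
  exact ⟨⟨h.1, trivial⟩, fun w hw => h.2 w hw.1⟩

lemma mapDomain {m : ℕ} {h : (Fin n →₀ ℕ) → (Fin m →₀ ℕ)} (hf : IsLeadExp f u)
    (hinj : Set.InjOn h f.support) (hlt : ∀ w ∈ f.support, drlLT w u → drlLT (h w) (h u)) :
    IsLeadExp (AddMonoidAlgebra.mapDomain h f) (h u) := by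
  refine ⟨(mem_support_mapDomain_of_injOn hinj).mpr ⟨u, hf.1, rfl⟩, fun v hv hvu => ?_⟩
  obtain ⟨w, hw, rfl⟩ := (mem_support_mapDomain_of_injOn hinj).mp hv
  exact hlt w hw (hf.2 w hw fun hwu => hvu (hwu ▸ rfl))

end IsLeadExp

section MonomialIdeal

variable {n : ℕ} {K : Type*} [Field K]

def leadSet (I : Ideal (MvPolynomial (Fin n) K)) : Set (Fin n →₀ ℕ) :=
  {u | ∃ f ∈ I, IsLeadExp f u}

lemma monSet_initialIdeal (I : Ideal (MvPolynomial (Fin n) K)) :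
    monSet K (initialIdeal I) = upperClosure (leadSet I) := by
  classical
  have hgens : {p | ∃ f ∈ I, f ≠ 0 ∧ ∃ u, IsLeadExp f u ∧ p = monomial u (1 : K)} =
      (fun u => monomial u (1 : K)) '' leadSet I := by
    ext p
    constructor
    · rintro ⟨f, hf, -, u, hu, rfl⟩
      exact ⟨u, ⟨f, hf, hu⟩, rfl⟩
    · rintro ⟨u, ⟨f, hf, hu⟩, rfl⟩
      exact ⟨f, hf, hu.ne_zero, u, hu, rfl⟩
  ext m
  rw [monSet, Set.mem_ofPred_eq, initialIdeal, hgens, mem_ideal_span_monomial_image,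
    support_monomial, if_neg one_ne_zero, SetLike.mem_coe, mem_upperClosure]
  simp

lemma minMonGens_initialIdeal (I : Ideal (MvPolynomial (Fin n) K)) :
    minMonGens K (initialIdeal I) = {u | Minimal (· ∈ leadSet I) u} := by
  ext u
  rw [Set.mem_ofPred_eq, ← minimal_mem_upperClosure_iff, ← monSet_initialIdeal, minMonGens,
    Set.mem_ofPred_eq, minimal_mem_iff]
  simp only [eq_comm]

end MonomialIdeal

section ProjectiveClosure

variable {τ : Type*} {n : ℕ} (μ : Fin n → τ →₀ ℕ) (top : τ →₀ ℕ)

noncomputable def projectiveClosureGens : Fin (n + 1) → τ ⊕ τ →₀ ℕ :=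
  Fin.cons (Finsupp.sumElim top 0) fun i => Finsupp.sumElim (top - μ i) (μ i)

variable {μ top}

lemma degree_projectiveClosureGens (hμ : ∀ i, μ i ≤ top) (x : Fin (n + 1)) :
    (projectiveClosureGens μ top x).degree = top.degree := by
  cases x using Fin.cases with
  | zero => simp [projectiveClosureGens, Finsupp.degree_sumElim]
  | succ i =>
    simp only [projectiveClosureGens, Fin.cons_succ, Finsupp.degree_sumElim, ← map_add,
      tsub_add_cancel_of_le (hμ i)]

lemma linearCombination_projectiveClosureGens_cons (hμ : ∀ i, μ i ≤ top) {e : ℕ} {w : Fin n →₀ ℕ}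
    (hw : w.degree ≤ e) :
    Finsupp.linearCombination ℕ (projectiveClosureGens μ top) (Finsupp.cons (e - w.degree) w) =
      Finsupp.sumElim (e • top - Finsupp.linearCombination ℕ μ w)
        (Finsupp.linearCombination ℕ μ w) := by
  ext (j | j)
  all_goals simp only [Finsupp.linearCombination_apply_eq_sum, Fin.sum_univ_succ,
    projectiveClosureGens, Finsupp.cons_zero, Finsupp.cons_succ, Fin.cons_zero, Fin.cons_succ,
    Finsupp.sumElim_inl, Finsupp.sumElim_inr, Finsupp.coe_tsub, Pi.sub_apply, Finsupp.smul_apply,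
    smul_eq_mul, Finsupp.coe_zero, Pi.zero_apply, mul_zero, zero_add]
  have hsplit : ∑ i, w i * (top j - μ i j) + ∑ i, w i * μ i j = w.degree * top j := by
    rw [← Finset.sum_add_distrib, Finsupp.degree_eq_sum, Finset.sum_mul]
    exact Finset.sum_congr rfl fun i _ => by rw [← mul_add, tsub_add_cancel_of_le (hμ i j)]
  have hle : w.degree * top j ≤ e * top j := Nat.mul_le_mul_right _ hw
  rw [tsub_mul]
  omega

lemma snd_sumFinsuppEquivProdFinsupp_linearCombination_projectiveClosureGens
    (w : Fin (n + 1) →₀ ℕ) :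
    (Finsupp.sumFinsuppEquivProdFinsupp
      (Finsupp.linearCombination ℕ (projectiveClosureGens μ top) w)).2 =
      Finsupp.linearCombination ℕ μ w.tail := by
  ext j
  simp [Finsupp.linearCombination_apply_eq_sum, Finsupp.tail_apply,
    Fin.sum_univ_succ, projectiveClosureGens]

end ProjectiveClosure

section Homogenization

variable {τ : Type*} {n : ℕ} {μ : Fin n → τ →₀ ℕ} {top : τ →₀ ℕ} {K : Type*} [CommSemiring K]

theorem exists_isLeadExp_homogenization (hμ : ∀ i, μ i ≤ top) {f : MvPolynomial (Fin n) K}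
    (hf : aeval (fun i => monomial (μ i) (1 : K)) f = 0) {u : Fin n →₀ ℕ} (hu : IsLeadExp f u) :
    ∃ g : MvPolynomial (Fin (n + 1)) K,
      aeval (fun x => monomial (projectiveClosureGens μ top x) (1 : K)) g = 0 ∧
        IsLeadExp g (Finsupp.cons 0 u) := by
  set e := u.degree
  set hom : (Fin n →₀ ℕ) → (Fin (n + 1) →₀ ℕ) := fun w => Finsupp.cons (e - w.degree) w
  have hom_injective : hom.Injective := fun w w' h => by
    simpa only [hom, Finsupp.tail_cons] using congrArg Finsupp.tail h
  refine ⟨AddMonoidAlgebra.mapDomain hom f, ?_, ?_⟩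
  · have hcomp : ∀ w ∈ (AddMonoidAlgebra.coeff f).support,
        (Finsupp.linearCombination ℕ (projectiveClosureGens μ top) ∘ hom) w =
          ((fun m => Finsupp.sumElim (e • top - m) m) ∘ Finsupp.linearCombination ℕ μ) w :=
      fun w hw => linearCombination_projectiveClosureGens_cons hμ (hu.degree_le hw)
    rw [aeval_monomial_one_eq_mapDomain] at hf ⊢
    rw [AddMonoidAlgebra.mapDomain_mapDomain, AddMonoidAlgebra.mapDomain_congr hcomp,
      ← AddMonoidAlgebra.mapDomain_mapDomain, hf, AddMonoidAlgebra.mapDomain_zero]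
  · simpa [hom, e] using hu.mapDomain hom_injective.injOn
      fun w hw => drlLT_cons (hu.degree_le hw) le_rfl

theorem exists_isLeadExp_dehomogenization (hμ : ∀ i, μ i ≤ top) (htop : top ≠ 0)
    {f : MvPolynomial (Fin (n + 1)) K}
    (hf : aeval (fun x => monomial (projectiveClosureGens μ top x) (1 : K)) f = 0)
    {v : Fin (n + 1) →₀ ℕ} (hv : IsLeadExp f v) :
    ∃ g : MvPolynomial (Fin n) K, aeval (fun i => monomial (μ i) (1 : K)) g = 0 ∧
      IsLeadExp g v.tail := by
  set fv := homogeneousComponent v.degree f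
  have hfv : aeval (fun x => monomial (projectiveClosureGens μ top x) (1 : K)) fv = 0 := by
    have htop_pos : 0 < top.degree := pos_of_ne_zero ((Finsupp.degree_eq_zero_iff top).not.mpr htop)
    rw [← homogeneousComponent_aeval htop_pos
      (fun x => isHomogeneous_monomial 1 (degree_projectiveClosureGens hμ x)), hf, map_zero]
  have hdeg : ∀ w ∈ fv.support, w.degree = v.degree := fun w hw => by
    rw [support_homogeneousComponent, Finset.mem_filter] at hw
    exact hw.2
  have tail_injOn : Set.InjOn Finsupp.tail (fv.support : Set (Fin (n + 1) →₀ ℕ)) := by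
    intro w hw w' hw' h
    have hw₀ := Finsupp.degree_eq_apply_zero_add_degree_tail w
    have hw₀' := Finsupp.degree_eq_apply_zero_add_degree_tail w'
    rw [hdeg w hw, h] at hw₀
    rw [hdeg w' hw'] at hw₀'
    rw [← Finsupp.cons_tail w, ← Finsupp.cons_tail w', h, show w 0 = w' 0 by omega]
  refine ⟨AddMonoidAlgebra.mapDomain Finsupp.tail fv, ?_, ?_⟩
  · rw [aeval_monomial_one_eq_mapDomain] at hfv ⊢
    -- setting `z_0 = 1` amounts to projecting `Γ^h` onto the second copy of `τ`
    have : Finsupp.linearCombination ℕ μ ∘ Finsupp.tail =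
        (fun m => (Finsupp.sumFinsuppEquivProdFinsupp m).2) ∘
          Finsupp.linearCombination ℕ (projectiveClosureGens μ top) :=
      funext fun w =>
        (snd_sumFinsuppEquivProdFinsupp_linearCombination_projectiveClosureGens w).symm
    rw [AddMonoidAlgebra.mapDomain_mapDomain, this, ← AddMonoidAlgebra.mapDomain_mapDomain, hfv,
      AddMonoidAlgebra.mapDomain_zero]
  · exact hv.homogeneousComponent.mapDomain tail_injOn
      fun w hw => drlLT_tail (hdeg w hw)

end Homogenization

section Assembly

variable {τ : Type*} {n : ℕ} {μ : Fin n → τ →₀ ℕ} {top : τ →₀ ℕ} {K : Type*} [Field K]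

theorem upperClosure_leadSet_ker_projectiveClosureGens (hμ : ∀ i, μ i ≤ top) (htop : top ≠ 0) :
    upperClosure (leadSet (RingHom.ker
      (aeval (R := K) fun x => monomial (projectiveClosureGens μ top x) (1 : K)).toRingHom)) =
    upperClosure (Finsupp.mapDomain Fin.succ ''
      leadSet (RingHom.ker (aeval (R := K) fun i => monomial (μ i) (1 : K)).toRingHom)) := by
  ext m
  simp only [SetLike.mem_coe, mem_upperClosure, Set.exists_mem_image]
  constructor
  · rintro ⟨v, ⟨f, hf, hv⟩, hvm⟩
    obtain ⟨g, hg, hgv⟩ := exists_isLeadExp_dehomogenization hμ htop (RingHom.mem_ker.mp hf) hv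
    refine ⟨v.tail, ⟨g, RingHom.mem_ker.mpr hg, hgv⟩, le_trans ?_ hvm⟩
    rw [← Finsupp.cons_zero_eq_mapDomain_succ]
    intro x
    cases x using Fin.cases <;> simp [Finsupp.tail_apply]
  · rintro ⟨u, ⟨f, hf, hu⟩, hum⟩
    obtain ⟨g, hg, hgu⟩ :=
      exists_isLeadExp_homogenization (top := top) hμ (RingHom.mem_ker.mp hf) hu
    rw [← Finsupp.cons_zero_eq_mapDomain_succ] at hum
    exact ⟨_, ⟨g, RingHom.mem_ker.mpr hg, hgu⟩, hum⟩

theorem minMonGens_initialIdeal_ker_projectiveClosureGens (hμ : ∀ i, μ i ≤ top) (htop : top ≠ 0) :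
    minMonGens K (initialIdeal (RingHom.ker
      (aeval (R := K) fun x => monomial (projectiveClosureGens μ top x) (1 : K)).toRingHom)) =
    Finsupp.mapDomain Fin.succ '' minMonGens K
      (initialIdeal (RingHom.ker (aeval (R := K) fun i => monomial (μ i) (1 : K)).toRingHom)) := by
  ext v
  rw [minMonGens_initialIdeal, minMonGens_initialIdeal, Set.mem_ofPred_eq,
    ← minimal_mem_upperClosure_iff, upperClosure_leadSet_ker_projectiveClosureGens hμ htop,
    minimal_mem_upperClosure_iff]
  exact (Set.ext_iff.mp (Finsupp.mapDomainOrderEmbedding (M := ℕ)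
    (Fin.succ_injective n)).image_setOfPred_minimal v).symm

end Assembly

lemma forall_apply_eq_zero_image_mapDomain_succ_iff {n d : ℕ} (S : Set (Fin n →₀ ℕ)) :
    (∀ u ∈ S, ∀ i : Fin n, (i : ℕ) < d → u i = 0) ↔
      ∀ v ∈ Finsupp.mapDomain Fin.succ '' S, ∀ i : Fin (n + 1), (i : ℕ) < d + 1 → v i = 0 := by
  simp only [Set.forall_mem_image, Fin.forall_fin_succ, ← Finsupp.cons_zero_eq_mapDomain_succ,
    Finsupp.cons_zero, Finsupp.cons_succ, Fin.val_succ, Fin.val_zero]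
  simp

theorem stmt11_general {K : Type*} [Field K] (d r : ℕ) (hd : 0 < d)
    (a : Fin d → (Fin d → ℕ)) (c : Fin (r + 1) → (Fin d → ℕ))
    (top : Fin d → ℕ)
    (hindep : LinearIndependent ℚ (fun i => fun j => (a i j : ℚ)))
    (hbdda : ∀ i j, a i j ≤ top j) (hbddc : ∀ i j, c i j ≤ top j)
    (IΓ : Ideal (MvPolynomial (Fin (d + r + 1)) K))
    (hIΓ : IΓ = RingHom.ker (aeval (fun i : Fin (d + r + 1) => monomial
      (Finsupp.equivFunOnFinite.symm (Fin.append a c i)) (1 : K))).toRingHom)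
    (IΓh : Ideal (MvPolynomial (Fin (d + r + 2)) K))
    (hIΓh : IΓh = RingHom.ker (aeval (Fin.cases
      (monomial (Finsupp.equivFunOnFinite.symm
        (Sum.elim top (0 : Fin d → ℕ))) (1 : K))
      (fun i : Fin (d + r + 1) => monomial (Finsupp.equivFunOnFinite.symm
        (Sum.elim (fun j => top j - Fin.append a c i j) (Fin.append a c i))) (1 : K)))).toRingHom) :
    (minMonGens K (initialIdeal IΓh) =
      Finsupp.mapDomain (Fin.succ) '' minMonGens K (initialIdeal IΓ)) ∧
    ((∀ u ∈ minMonGens K (initialIdeal IΓ), ∀ i : Fin (d + r + 1), (i : ℕ) < d → u i = 0) ↔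
      (∀ u ∈ minMonGens K (initialIdeal IΓh), ∀ i : Fin (d + r + 2), (i : ℕ) < d + 1 →
        u i = 0)) := by
  set μ : Fin (d + r + 1) → Fin d →₀ ℕ := fun i => Finsupp.equivFunOnFinite.symm (Fin.append a c i)
  set top' : Fin d →₀ ℕ := Finsupp.equivFunOnFinite.symm top
  have hμ : ∀ i, μ i ≤ top' := fun i j =>
    Fin.addCases (motive := fun i => Fin.append a c i j ≤ top j)
      (fun i => by simpa using hbdda i j) (fun i => by simpa using hbddc i j) i
  have htop' : top' ≠ 0 := by
    intro h0
    refine hindep.ne_zero ⟨0, hd⟩ (funext fun j => ?_)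
    have htop0 : top j = 0 := DFunLike.congr_fun h0 j
    have ha := hbdda ⟨0, hd⟩ j
    simp only [Pi.zero_apply, Nat.cast_eq_zero]
    omega
  have hgens : Fin.cases (monomial (Finsupp.equivFunOnFinite.symm (Sum.elim top 0)) (1 : K))
      (fun i => monomial (Finsupp.equivFunOnFinite.symm
        (Sum.elim (fun j => top j - Fin.append a c i j) (Fin.append a c i))) (1 : K)) =
      fun x => monomial (projectiveClosureGens μ top' x) 1 := by
    funext x
    cases x using Fin.cases <;>
    · simp only [Fin.cases_zero, Fin.cases_succ, projectiveClosureGens, Fin.cons_zero,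
        Fin.cons_succ]
      refine congrArg (fun m => monomial m (1 : K)) ?_
      ext (j | j) <;> simp [top', μ]
  have hmin : minMonGens K (initialIdeal IΓh) =
      Finsupp.mapDomain Fin.succ '' minMonGens K (initialIdeal IΓ) := by
    rw [hIΓ, hIΓh, hgens]
    exact minMonGens_initialIdeal_ker_projectiveClosureGens hμ htop'
  exact ⟨hmin, hmin ▸ forall_apply_eq_zero_image_mapDomain_succ_iff _⟩

/-- for a simplicial affine semigroup `Γ` (extremal-ray generators `a`,
further generators `c` with `top = c (last)` dominating all of them), the minimal monomial
generators of `in_≺(I(Γ))` and of `in_{≺₀}(I(Γ^h))` coincide (via the embedding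
`z_i ↦ z_i`, `z_0` being the new smallest variable), and consequently `z_1,…,z_d` divide no
minimal generator of `in_≺(I(Γ))` iff `z_0,…,z_d` divide no minimal generator of
`in_{≺₀}(I(Γ^h))`. -/
theorem stmt11 {K : Type*} [Field K] (d r : ℕ) (hd : 0 < d)
    (a : Fin d → (Fin d → ℕ)) (c : Fin (r + 1) → (Fin d → ℕ))
    (top : Fin d → ℕ) (htop : top = c (Fin.last r))
    (hindep : LinearIndependent ℚ (fun i => fun j => (a i j : ℚ)))
    (hbdda : ∀ i j, a i j ≤ top j) (hbddc : ∀ i j, c i j ≤ top j)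
    (hsimp : ∀ i : Fin (r + 1), ∃ q : Fin d → ℚ, (∀ t, 0 ≤ q t) ∧
      (fun j => (c i j : ℚ)) = ∑ t, q t • fun j => (a t j : ℚ))
    (IΓ : Ideal (MvPolynomial (Fin (d + r + 1)) K))
    (hIΓ : IΓ = RingHom.ker (aeval (fun i : Fin (d + r + 1) => monomial
      (Finsupp.equivFunOnFinite.symm (Fin.append a c i)) (1 : K))).toRingHom)
    (IΓh : Ideal (MvPolynomial (Fin (d + r + 2)) K))
    (hIΓh : IΓh = RingHom.ker (aeval (Fin.cases
      (monomial (Finsupp.equivFunOnFinite.symm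
        (Sum.elim top (0 : Fin d → ℕ))) (1 : K))
      (fun i : Fin (d + r + 1) => monomial (Finsupp.equivFunOnFinite.symm
        (Sum.elim (fun j => top j - Fin.append a c i j) (Fin.append a c i))) (1 : K)))).toRingHom) :
    (minMonGens K (initialIdeal IΓh) =
      Finsupp.mapDomain (Fin.succ) '' minMonGens K (initialIdeal IΓ)) ∧
    ((∀ u ∈ minMonGens K (initialIdeal IΓ), ∀ i : Fin (d + r + 1), (i : ℕ) < d → u i = 0) ↔
      (∀ u ∈ minMonGens K (initialIdeal IΓh), ∀ i : Fin (d + r + 2), (i : ℕ) < d + 1 →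
        u i = 0)) :=
  stmt11_general d r hd a c top hindep hbdda hbddc IΓ hIΓ IΓh hIΓh
end
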